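/- arXiv:1810.01877 — 3 statements merged into one kernel-verified Lean document; each statement's English description precedes it below -/
import Mathlib

section
/- Let p ∈ [1,∞), q ∈ [1,∞], c, c_o > 0, k ≥ 0 an integer, and d = (d_0, d_1, …, d_{k+1}) with positive integer entries. If f : ℝ^{d_0} → ℝ^{d_{k+1}} is a ReLU network f = T_{k+1} ∘ σ ∘ T_k ∘ ⋯ ∘ σ ∘ T_1 (with T_i(u) = W_i^T u + B_i) of architecture d satisfying ‖T_i‖_{p,q} ≤ c for i = 1, …, k and ‖T_{k+1}‖_{p,q} ≤ c_o, then f ∈ N_{p,q,c,c_o}^{k,d}; that is, f is also representable by a ReLU network of the same architecture with ‖T_i‖_{p,q} = c exactly for i = 1, …, k and output layer norm at most c_o. -/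
/-!
ReLU is positively homogeneous: `σ (l * y) = l * σ y` for `l ≥ 0`. So if a hidden layer has
norm `t ≤ c` with `t > 0`, multiplying it by `c / t` and the weights (not the bias) of the next
layer by `t / c ≤ 1` keeps the network function, gives the hidden layer norm exactly `c`, and can
only decrease the norm of the next layer. A zero hidden layer feeds `σ 0 = 0` forward, so it can
be replaced by any layer of norm `c` once the next layer's weights are set to zero. Normalising
the hidden layers one after the other, from the input side, proves the claim.
-/

open scoped BigOperators Classical ENNReal NNReal
open MeasureTheory

/-- ReLU activation. -/
noncomputable def relu (x : ℝ) : ℝ := max x 0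

/-- Affine layer `u ↦ Ṽᵀ (1, u)` where the first row of `Ṽ` is the bias. -/
noncomputable def affineT {m n : ℕ} (V : Matrix (Fin (m + 1)) (Fin n) ℝ)
    (u : Fin m → ℝ) : Fin n → ℝ :=
  fun j => ∑ i, V i j * (Fin.cons (1 : ℝ) u : Fin (m + 1) → ℝ) i

/-- The `(j+1)`-layer map of a network: `T_{j+1} ∘ σ ∘ T_j ∘ ⋯ ∘ σ ∘ T_1`. -/
noncomputable def netFun (d : ℕ → ℕ)
    (V : ∀ i : ℕ, Matrix (Fin (d i + 1)) (Fin (d (i + 1))) ℝ) :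
    (j : ℕ) → (Fin (d 0) → ℝ) → (Fin (d (j + 1)) → ℝ)
  | 0 => fun x => affineT (V 0) x
  | (j + 1) => fun x => affineT (V (j + 1)) (fun i => relu (netFun d V j x i))

/-- `L_{p,q}` norm of a matrix, `q = ⊤` giving the sup over columns. -/
noncomputable def lpqNorm (p : ℝ) (q : ℝ≥0∞) {s1 s2 : ℕ}
    (A : Matrix (Fin s1) (Fin s2) ℝ) : ℝ :=
  if q = ⊤ then ⨆ j : Fin s2, (∑ i, |A i j| ^ p) ^ (1 / p)
  else (∑ j, (∑ i, |A i j| ^ p) ^ (q.toReal / p)) ^ (1 / q.toReal)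

/-- `1/q` with the convention `1/∞ = 0`. -/
noncomputable def qInv (q : ℝ≥0∞) : ℝ := if q = ⊤ then 0 else 1 / q.toReal

/-- The `ℓ_{p*}` norm, where `1/p + 1/p* = 1`, with `p* = ∞` when `p = 1`. -/
noncomputable def dualNorm (p : ℝ) {m : ℕ} (v : Fin m → ℝ) : ℝ :=
  if p = 1 then ⨆ j, |v j| else (∑ j, |v j| ^ (p / (p - 1))) ^ ((p - 1) / p)

/-- The class `N_{p,q,c,c_o}^{k,d}` of `L_{p,q}` weight-normalized networks. -/
noncomputable def NNclass (p : ℝ) (q : ℝ≥0∞) (c co : ℝ) (k : ℕ) (d : ℕ → ℕ) :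
    Set ((Fin (d 0) → ℝ) → (Fin (d (k + 1)) → ℝ)) :=
  {f | ∃ V : ∀ i : ℕ, Matrix (Fin (d i + 1)) (Fin (d (i + 1))) ℝ,
        f = netFun d V k ∧ (∀ i < k, lpqNorm p q (V i) = c) ∧ lpqNorm p q (V k) ≤ co}

/-- Scalar-valued version of `NNclass` (for networks with output width 1). -/
noncomputable def scalarClass (p : ℝ) (q : ℝ≥0∞) (c co : ℝ) (k : ℕ) (d : ℕ → ℕ) :
    Set ((Fin (d 0) → ℝ) → ℝ) :=
  {f | ∃ g ∈ NNclass p q c co k d, ∀ x j, g x j = f x}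

/-- Empirical Rademacher complexity of a class of real-valued functions. -/
noncomputable def empRad {X : Type*} {n : ℕ} (F : Set (X → ℝ)) (x : Fin n → X) : ℝ :=
  ((2 : ℝ) ^ n)⁻¹ * ∑ ε : Fin n → Bool,
    ⨆ f ∈ F, (n : ℝ)⁻¹ * ∑ i, (if ε i then (1 : ℝ) else -1) * f (x i)

section LpqNorm

variable {p : ℝ} {q : ℝ≥0∞} {s1 s2 : ℕ}

lemma lpqNorm_nonneg (A : Matrix (Fin s1) (Fin s2) ℝ) : 0 ≤ lpqNorm p q A := by
  unfold lpqNorm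
  split_ifs
  · exact Real.iSup_nonneg fun j => by positivity
  · positivity

lemma lpqNorm_mono (hp : 0 ≤ p) {A B : Matrix (Fin s1) (Fin s2) ℝ}
    (h : ∀ i j, |B i j| ≤ |A i j|) : lpqNorm p q B ≤ lpqNorm p q A := by
  have hcol : ∀ j, ∑ i, |B i j| ^ p ≤ ∑ i, |A i j| ^ p := fun j =>
    Finset.sum_le_sum fun i _ => Real.rpow_le_rpow (abs_nonneg _) (h i j) hp
  unfold lpqNorm
  split_ifs
  · exact ciSup_mono (Finite.bddAbove_range _) fun j =>
      Real.rpow_le_rpow (by positivity) (hcol j) (by positivity)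
  · exact Real.rpow_le_rpow (by positivity) (Finset.sum_le_sum fun j _ =>
      Real.rpow_le_rpow (by positivity) (hcol j) (by positivity)) (by positivity)

lemma lpqNorm_smul (hp : 0 < p) (hq : q ≠ 0) (A : Matrix (Fin s1) (Fin s2) ℝ) {l : ℝ}
    (hl : 0 ≤ l) : lpqNorm p q (l • A) = l * lpqNorm p q A := by
  have hcol : ∀ j, ∑ i, |(l • A) i j| ^ p = l ^ p * ∑ i, |A i j| ^ p := fun j => by
    simp only [Matrix.smul_apply, smul_eq_mul, abs_mul, abs_of_nonneg hl,
      Real.mul_rpow hl (abs_nonneg _), Finset.mul_sum]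
  have hpow : ∀ j (e : ℝ),
      (l ^ p * ∑ i, |A i j| ^ p) ^ (e / p) = l ^ e * (∑ i, |A i j| ^ p) ^ (e / p) := by
    intro j e
    rw [Real.mul_rpow (by positivity) (by positivity), ← Real.rpow_mul hl,
      mul_div_cancel₀ _ hp.ne']
  unfold lpqNorm
  split_ifs with hqt
  · simp only [hcol, hpow _ 1, Real.rpow_one, Real.mul_iSup_of_nonneg hl]
  · have hq0 : q.toReal ≠ 0 := ENNReal.toReal_ne_zero.mpr ⟨hq, hqt⟩
    simp only [hcol, hpow, ← Finset.mul_sum]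
    rw [Real.mul_rpow (by positivity) (by positivity), ← Real.rpow_mul hl,
      mul_one_div_cancel hq0, Real.rpow_one]

lemma abs_le_lpqNorm (hp : 0 < p) (hq : q ≠ 0) (A : Matrix (Fin s1) (Fin s2) ℝ) (i : Fin s1)
    (j : Fin s2) : |A i j| ≤ lpqNorm p q A := by
  have hcol : |A i j| ≤ (∑ i, |A i j| ^ p) ^ (1 / p) :=
    calc |A i j| = (|A i j| ^ p) ^ (1 / p) := by
          rw [one_div, Real.rpow_rpow_inv (abs_nonneg _) hp.ne']
      _ ≤ _ := Real.rpow_le_rpow (by positivity) (Finset.single_le_sum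
          (f := fun i => |A i j| ^ p) (fun i _ => by positivity) (Finset.mem_univ i))
          (by positivity)
  refine hcol.trans ?_
  unfold lpqNorm
  split_ifs with hqt
  · exact le_ciSup (f := fun j => (∑ i, |A i j| ^ p) ^ (1 / p)) (Finite.bddAbove_range _) j
  · have hq0 : q.toReal ≠ 0 := ENNReal.toReal_ne_zero.mpr ⟨hq, hqt⟩
    calc (∑ i, |A i j| ^ p) ^ (1 / p)
        = ((∑ i, |A i j| ^ p) ^ (q.toReal / p)) ^ (1 / q.toReal) := by
          rw [← Real.rpow_mul (by positivity)]
          congr 1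
          field_simp
      _ ≤ _ := Real.rpow_le_rpow (by positivity) (Finset.single_le_sum
          (f := fun j => (∑ i, |A i j| ^ p) ^ (q.toReal / p)) (fun j _ => by positivity)
          (Finset.mem_univ j)) (by positivity)

lemma exists_lpqNorm_eq (hp : 0 < p) (hq : q ≠ 0) (h1 : 0 < s1) (h2 : 0 < s2) {c : ℝ}
    (hc : 0 ≤ c) : ∃ A : Matrix (Fin s1) (Fin s2) ℝ, lpqNorm p q A = c := by
  set J : Matrix (Fin s1) (Fin s2) ℝ := Matrix.of fun _ _ => 1
  have hJ : 0 < lpqNorm p q J :=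
    one_pos.trans_le (by simpa [J] using abs_le_lpqNorm hp hq J ⟨0, h1⟩ ⟨0, h2⟩)
  refine ⟨(c / lpqNorm p q J) • J, ?_⟩
  rw [lpqNorm_smul hp hq J (by positivity), div_mul_cancel₀ _ hJ.ne']

end LpqNorm

lemma relu_mul {l : ℝ} (hl : 0 ≤ l) (y : ℝ) : relu (l * y) = l * relu y := by
  rw [relu, relu, mul_max_of_nonneg _ _ hl, mul_zero]

section Layers

variable {m n n' : ℕ}

lemma affineT_smul (l : ℝ) (M : Matrix (Fin (m + 1)) (Fin n) ℝ) (u : Fin m → ℝ) :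
    affineT (l • M) u = l • affineT M u := by
  funext j
  simp only [affineT, Matrix.smul_apply, smul_eq_mul, Pi.smul_apply, Finset.mul_sum, mul_assoc]

def scaleWeights (s : ℝ) (W : Matrix (Fin (m + 1)) (Fin n) ℝ) :
    Matrix (Fin (m + 1)) (Fin n) ℝ :=
  Matrix.of fun i j => (Fin.cons 1 fun _ => s : Fin (m + 1) → ℝ) i * W i j

lemma affineT_scaleWeights (s : ℝ) (W : Matrix (Fin (m + 1)) (Fin n) ℝ) (u : Fin m → ℝ) :
    affineT (scaleWeights s W) u = affineT W (s • u) := by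
  funext j
  refine Finset.sum_congr rfl fun i _ => ?_
  refine Fin.cases ?_ (fun i => ?_) i <;> simp [scaleWeights, mul_comm, mul_left_comm]

lemma lpqNorm_scaleWeights_le {p : ℝ} (hp : 0 ≤ p) (q : ℝ≥0∞) {s : ℝ} (hs₀ : 0 ≤ s)
    (hs₁ : s ≤ 1) (W : Matrix (Fin (m + 1)) (Fin n) ℝ) :
    lpqNorm p q (scaleWeights s W) ≤ lpqNorm p q W := by
  refine lpqNorm_mono hp fun i j => ?_
  refine Fin.cases ?_ (fun i => ?_) i
  · simp [scaleWeights]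
  · simpa [scaleWeights, abs_mul, abs_of_nonneg hs₀] using
      mul_le_of_le_one_left (abs_nonneg _) hs₁

lemma exists_relu_affineT_eq_smul {p : ℝ} (hp : 0 < p) {q : ℝ≥0∞} (hq : q ≠ 0)
    (hn : 0 < n) {c : ℝ} (hc : 0 < c) {M : Matrix (Fin (m + 1)) (Fin n) ℝ}
    (hM : lpqNorm p q M ≤ c) :
    ∃ (A : Matrix (Fin (m + 1)) (Fin n) ℝ) (s : ℝ),
      lpqNorm p q A = c ∧ 0 ≤ s ∧ s ≤ 1 ∧
      ∀ u, (fun i => relu (affineT M u i)) = s • fun i => relu (affineT A u i) := by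
  rcases (lpqNorm_nonneg M).eq_or_lt' with hM0 | hMpos
  · obtain ⟨A, hA⟩ := exists_lpqNorm_eq (q := q) hp hq m.succ_pos hn hc.le
    have hM0 : M = 0 := Matrix.ext fun i j =>
      abs_nonpos_iff.mp (hM0 ▸ abs_le_lpqNorm hp hq M i j)
    refine ⟨A, 0, hA, le_rfl, zero_le_one, fun u => ?_⟩
    funext i
    simp [hM0, affineT, relu]
  · refine ⟨(c / lpqNorm p q M) • M, lpqNorm p q M / c, ?_, by positivity,
      (div_le_one hc).mpr hM, fun u => ?_⟩
    · rw [lpqNorm_smul hp hq M (by positivity), div_mul_cancel₀ _ hMpos.ne']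
    · funext i
      rw [affineT_smul, Pi.smul_apply, Pi.smul_apply, smul_eq_mul, smul_eq_mul,
        relu_mul (by positivity), ← mul_assoc, div_mul_div_cancel₀ hc.ne', div_self hMpos.ne',
        one_mul]

lemma exists_lpqNorm_eq_affineT_relu_eq {p : ℝ} (hp : 0 < p) {q : ℝ≥0∞} (hq : q ≠ 0)
    (hn : 0 < n) {c : ℝ} (hc : 0 < c) {M : Matrix (Fin (m + 1)) (Fin n) ℝ}
    (hM : lpqNorm p q M ≤ c) (W : Matrix (Fin (n + 1)) (Fin n') ℝ) :
    ∃ (A : Matrix (Fin (m + 1)) (Fin n) ℝ) (W' : Matrix (Fin (n + 1)) (Fin n') ℝ),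
      lpqNorm p q A = c ∧ lpqNorm p q W' ≤ lpqNorm p q W ∧
      ∀ u, affineT W' (fun i => relu (affineT A u i)) =
        affineT W (fun i => relu (affineT M u i)) := by
  obtain ⟨A, s, hA, hs₀, hs₁, hrelu⟩ := exists_relu_affineT_eq_smul hp hq hn hc hM
  exact ⟨A, scaleWeights s W, hA, lpqNorm_scaleWeights_le hp.le q hs₀ hs₁ W,
    fun u => by rw [affineT_scaleWeights, hrelu]⟩

end Layers

section Network

variable {d : ℕ → ℕ}

lemma netFun_congr {V W : ∀ i : ℕ, Matrix (Fin (d i + 1)) (Fin (d (i + 1))) ℝ} {j : ℕ}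
    (h : ∀ i ≤ j, V i = W i) : netFun d V j = netFun d W j := by
  induction j with
  | zero => simp only [netFun, h 0 le_rfl]
  | succ j ih => simp only [netFun, ih fun i hi => h i (hi.trans j.le_succ), h (j + 1) le_rfl]

lemma netFun_succ_congr {V W : ∀ i : ℕ, Matrix (Fin (d i + 1)) (Fin (d (i + 1))) ℝ} {k : ℕ}
    (hlow : ∀ i < k, W i = V i)
    (htop : ∀ u, affineT (W (k + 1)) (fun i => relu (affineT (W k) u i)) =
      affineT (V (k + 1)) (fun i => relu (affineT (V k) u i))) :
    netFun d W (k + 1) = netFun d V (k + 1) := by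
  funext x
  cases k with
  | zero => exact htop x
  | succ k =>
    have : netFun d W k = netFun d V k := netFun_congr fun i hi => hlow i (by omega)
    simp only [netFun, this, htop]

lemma exists_netFun_eq_lpqNorm_eq {p : ℝ} (hp : 0 < p) {q : ℝ≥0∞} (hq : q ≠ 0) {c : ℝ}
    (hc : 0 < c) {k : ℕ} (hd : ∀ i < k, 0 < d (i + 1))
    (V : ∀ i : ℕ, Matrix (Fin (d i + 1)) (Fin (d (i + 1))) ℝ)
    (hV : ∀ i < k, lpqNorm p q (V i) ≤ c) :
    ∃ V' : ∀ i : ℕ, Matrix (Fin (d i + 1)) (Fin (d (i + 1))) ℝ,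
      netFun d V' k = netFun d V k ∧ (∀ i < k, lpqNorm p q (V' i) = c) ∧
      lpqNorm p q (V' k) ≤ lpqNorm p q (V k) := by
  induction k generalizing V with
  | zero => exact ⟨V, rfl, fun i hi => absurd hi i.not_lt_zero, le_rfl⟩
  | succ k ih =>
    obtain ⟨V₁, hV₁, hnorm₁, hlast₁⟩ :=
      ih (fun i hi => hd i (by omega)) V fun i hi => hV i (by omega)
    obtain ⟨A, W, hA, hW, hcomp⟩ :=
      exists_lpqNorm_eq_affineT_relu_eq hp hq (hd k k.lt_succ_self) hc
        (hlast₁.trans (hV k k.lt_succ_self)) (V (k + 1))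
    set V₂ := Function.update V₁ (k + 1) (V (k + 1))
    have hV₂ : netFun d V₂ (k + 1) = netFun d V (k + 1) := by
      have : netFun d V₂ k = netFun d V k :=
        (netFun_congr fun i hi => Function.update_of_ne (show i ≠ k + 1 by omega) _ _).trans hV₁
      funext x
      simp only [netFun, this, V₂, Function.update_self]
    refine ⟨Function.update (Function.update V₁ k A) (k + 1) W, ?_, fun i hi => ?_, ?_⟩
    · refine (netFun_succ_congr (fun i hi => ?_) fun u => ?_).trans hV₂
      · simp [V₂, Function.update_of_ne, hi.ne, (hi.trans k.lt_succ_self).ne]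
      · simpa [V₂] using hcomp u
    · rcases Nat.lt_succ_iff_lt_or_eq.mp hi with hi | rfl
      · rw [Function.update_of_ne (show i ≠ k + 1 by omega), Function.update_of_ne hi.ne]
        exact hnorm₁ i hi
      · simpa using hA
    · simpa using hW

end Network

theorem mem_NNclass_of_norm_le_general
    (p : ℝ) (hp : 1 ≤ p) (q : ℝ≥0∞) (hq : 1 ≤ q)
    (c co : ℝ) (hc : 0 < c)
    (k : ℕ) (d : ℕ → ℕ) (hd : ∀ i, 0 < d i)
    (V : ∀ i : ℕ, Matrix (Fin (d i + 1)) (Fin (d (i + 1))) ℝ)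
    (hhid : ∀ i < k, lpqNorm p q (V i) ≤ c)
    (hlast : lpqNorm p q (V k) ≤ co) :
    netFun d V k ∈ NNclass p q c co k d := by
  obtain ⟨V', hV', hnorm, hle⟩ := exists_netFun_eq_lpqNorm_eq (one_pos.trans_le hp)
    (one_pos.trans_le hq).ne' hc (fun i _ => hd (i + 1)) V hhid
  exact ⟨V', hV'.symm, hnorm, hle.trans hlast⟩

/-- Theorem 1(a): a network whose hidden layers have `L_{p,q}` norm at most `c` and
output layer norm at most `c_o` belongs to `N_{p,q,c,c_o}^{k,d}`. -/
theorem mem_NNclass_of_norm_le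
    (p : ℝ) (hp : 1 ≤ p) (q : ℝ≥0∞) (hq : 1 ≤ q)
    (c co : ℝ) (hc : 0 < c) (hco : 0 < co)
    (k : ℕ) (d : ℕ → ℕ) (hd : ∀ i, 0 < d i)
    (V : ∀ i : ℕ, Matrix (Fin (d i + 1)) (Fin (d (i + 1))) ℝ)
    (hhid : ∀ i < k, lpqNorm p q (V i) ≤ c)
    (hlast : lpqNorm p q (V k) ≤ co) :
    netFun d V k ∈ NNclass p q c co k d :=
  mem_NNclass_of_norm_le_general p hp q hq c co hc k d hd V hhid hlast
end

section
/- Let p ∈ (1,2] and let p* satisfy 1/p + 1/p* = 1 (so p* ∈ [2,∞)). Let z_1, …, z_n ∈ ℝ^{m_1} with ‖z_i‖_∞ ≤ 1 for all i. Then (1/n)·2^{-n} Σ_{ε ∈ {-1,1}^n} ‖Σ_{i=1}^n ε_i z_i‖_{p*} ≤ (m_1^{1/p*}/√n) · min( √(p*−1), √(2·log(2m_1)) ). -/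
open scoped BigOperators Classical ENNReal NNReal
open MeasureTheory

/-! Write `q = p / (p - 1) ≥ 2` and `S_j = ∑ᵢ εᵢ zᵢⱼ`, so that `∑ᵢ zᵢⱼ² ≤ n`.

For the factor `√(q - 1)`: by Jensen, `𝔼 ‖S‖_q ≤ (∑ⱼ 𝔼 |S_j|^q)^(1/q)`, and the
Khintchine-type bound `𝔼 |S_j|^q ≤ ((q - 1) n)^(q/2)` follows by interpolating (weighted
AM-GM) between the second moment and a moment of even order `2k ≥ q`; the latter is at most
`(2k - 1)‼ n^k`, by induction on `n` after expanding `(T + c)^(2k) + (T - c)^(2k)` binomially.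

For the factor `√(2 log (2m))`: `‖S‖_q ≤ m^(1/q) maxⱼ |S_j|` and, for `t > 0`,
`t maxⱼ |S_j| ≤ log ∑ⱼ 2 cosh (t S_j)`. Jensen for `log` and `𝔼 cosh (t S_j) ≤ exp (t² n / 2)`
bound `𝔼 maxⱼ |S_j|` by `(log (2m) + t² n / 2) / t`, which is `√(2 n log (2m))` at the best `t`.
-/

open Finset Real
open scoped Nat

theorem sum_range_two_mul_add_one {M : Type*} [AddCommMonoid M] (f : ℕ → M) (k : ℕ) :
    ∑ m ∈ range (2 * k + 1), f m =
      ∑ i ∈ range (k + 1), f (2 * i) + ∑ i ∈ range k, f (2 * i + 1) := by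
  induction k with
  | zero => simp
  | succ k ih =>
    rw [show 2 * (k + 1) + 1 = 2 * k + 1 + 1 + 1 by ring, sum_range_succ, sum_range_succ, ih,
      sum_range_succ (fun i => f (2 * i)) (k + 1), sum_range_succ (fun i => f (2 * i + 1)) k,
      show 2 * (k + 1) = 2 * k + 1 + 1 by ring]
    abel

theorem add_pow_add_sub_pow_two_mul {R : Type*} [CommRing R] (x y : R) (k : ℕ) :
    (x + y) ^ (2 * k) + (x - y) ^ (2 * k) =
      ∑ i ∈ range (k + 1), 2 * x ^ (2 * i) * y ^ (2 * (k - i)) * (2 * k).choose (2 * i) := by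
  rw [sub_eq_add_neg, add_pow, add_pow, ← sum_add_distrib, sum_range_two_mul_add_one]
  have hodd : ∀ i ∈ range k,
      x ^ (2 * i + 1) * y ^ (2 * k - (2 * i + 1)) * (2 * k).choose (2 * i + 1) +
        x ^ (2 * i + 1) * (-y) ^ (2 * k - (2 * i + 1)) * (2 * k).choose (2 * i + 1) = 0 := by
    intro i hi
    have : Odd (2 * k - (2 * i + 1)) := ⟨k - i - 1, by have := mem_range.mp hi; omega⟩
    rw [this.neg_pow]; ring
  rw [sum_eq_zero hodd, add_zero]
  refine sum_congr rfl fun i hi => ?_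
  rw [show 2 * k - 2 * i = 2 * (k - i) by omega, (even_two_mul _).neg_pow]
  ring

theorem two_pow_mul_factorial_mul_doubleFactorial (k : ℕ) :
    2 ^ k * k ! * (2 * k - 1)‼ = (2 * k)! := by
  cases k with
  | zero => rfl
  | succ k =>
    rw [show 2 * (k + 1) - 1 = 2 * k + 1 by omega, ← Nat.doubleFactorial_two_mul,
      show 2 * (k + 1) = 2 * k + 1 + 1 by ring, Nat.factorial_eq_mul_doubleFactorial]

theorem choose_mul_doubleFactorial_le (i j : ℕ) :
    (2 * i + 2 * j).choose (2 * i) * (2 * i - 1)‼ ≤ (2 * i + 2 * j - 1)‼ * (i + j).choose i := by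
  have hF : 0 < 2 ^ (i + j) * i ! * j ! * (2 * j)! := by positivity
  refine Nat.le_of_mul_le_mul_right ?_ hF
  have h₁ := Nat.add_choose_mul_factorial_mul_factorial (2 * i) (2 * j)
  have h₂ := Nat.add_choose_mul_factorial_mul_factorial i j
  have h₃ := two_pow_mul_factorial_mul_doubleFactorial i
  have h₄ := two_pow_mul_factorial_mul_doubleFactorial (i + j)
  rw [← Nat.choose_symm_add] at h₁ h₂
  rw [mul_add] at h₄
  calc (2 * i + 2 * j).choose (2 * i) * (2 * i - 1)‼ * (2 ^ (i + j) * i ! * j ! * (2 * j)!)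
      = (2 * i + 2 * j)! * (2 ^ j * j !) := by rw [← h₁, ← h₃]; ring
    _ ≤ (2 * i + 2 * j)! * (2 * j)! := by
      gcongr; exact Nat.doubleFactorial_two_mul j ▸ Nat.doubleFactorial_le_factorial _
    _ = (2 * i + 2 * j - 1)‼ * (i + j).choose i * (2 ^ (i + j) * i ! * j ! * (2 * j)!) := by
      rw [← h₄, ← h₂]; ring

theorem doubleFactorial_two_mul_sub_one_le (k : ℕ) : (2 * k - 1)‼ ≤ (2 * k - 1) ^ (k - 1) := by
  induction k with
  | zero => rfl
  | succ k ih =>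
    rw [show 2 * (k + 1) - 1 = 2 * k + 1 by omega, Nat.doubleFactorial_add_one,
      Nat.add_sub_cancel]
    rcases k with _ | k
    · rfl
    · calc (2 * (k + 1) + 1) * (2 * (k + 1) - 1)‼
          ≤ (2 * (k + 1) + 1) * (2 * (k + 1) + 1) ^ k := by
            gcongr
            exact ih.trans (Nat.pow_le_pow_left (by omega) _)
        _ = (2 * (k + 1) + 1) ^ (k + 1) := by ring

theorem sum_mul_rpow_mul_rpow_le {ι : Type*} (s : Finset ι) {w X Y : ι → ℝ}
    (hw : ∀ i ∈ s, 0 ≤ w i) (hX : ∀ i ∈ s, 0 ≤ X i) (hY : ∀ i ∈ s, 0 ≤ Y i)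
    {α β : ℝ} (hα : 0 ≤ α) (hβ : 0 ≤ β) (hαβ : α + β = 1) {A B : ℝ} (hA : 0 < A) (hB : 0 < B)
    (hXA : ∑ i ∈ s, w i * X i ≤ A) (hYB : ∑ i ∈ s, w i * Y i ≤ B) :
    ∑ i ∈ s, w i * (X i ^ α * Y i ^ β) ≤ A ^ α * B ^ β := by
  have hpt : ∀ i ∈ s, X i ^ α * Y i ^ β ≤ A ^ α * B ^ β * (α / A * X i + β / B * Y i) := by
    intro i hi
    have hamgm := geom_mean_le_arith_mean2_weighted hα hβ (div_nonneg (hX i hi) hA.le)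
      (div_nonneg (hY i hi) hB.le) hαβ
    rw [div_rpow (hX i hi) hA.le, div_rpow (hY i hi) hB.le] at hamgm
    have hAB : 0 < A ^ α * B ^ β := by positivity
    calc X i ^ α * Y i ^ β = A ^ α * B ^ β * (X i ^ α / A ^ α * (Y i ^ β / B ^ β)) := by
          field_simp
      _ ≤ A ^ α * B ^ β * (α * (X i / A) + β * (Y i / B)) := by gcongr
      _ = A ^ α * B ^ β * (α / A * X i + β / B * Y i) := by ring
  calc ∑ i ∈ s, w i * (X i ^ α * Y i ^ β)
      ≤ ∑ i ∈ s, w i * (A ^ α * B ^ β * (α / A * X i + β / B * Y i)) :=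
        sum_le_sum fun i hi => mul_le_mul_of_nonneg_left (hpt i hi) (hw i hi)
    _ = A ^ α * B ^ β * (α / A * ∑ i ∈ s, w i * X i + β / B * ∑ i ∈ s, w i * Y i) := by
        simp only [mul_sum, ← sum_add_distrib]
        exact sum_congr rfl fun i _ => by ring
    _ ≤ A ^ α * B ^ β * (α / A * A + β / B * B) := by gcongr
    _ = A ^ α * B ^ β := by
        rw [div_mul_cancel₀ _ hA.ne', div_mul_cancel₀ _ hB.ne', hαβ, mul_one]

theorem abs_rpow_eq_sq_rpow_mul_pow_rpow (x : ℝ) (k : ℕ) {β : ℝ} (hβ0 : 0 ≤ β) (hβ1 : β ≤ 1) :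
    |x| ^ (2 * (1 - β) + 2 * k * β) = (x ^ 2) ^ (1 - β) * (x ^ (2 * k)) ^ β := by
  rw [rpow_add_of_nonneg (abs_nonneg _) (by linarith) (by positivity),
    rpow_mul (abs_nonneg _), rpow_mul (abs_nonneg _)]
  norm_cast
  rw [pow_abs, pow_abs, abs_of_nonneg (sq_nonneg _),
    abs_of_nonneg ((even_two_mul k).pow_nonneg _)]

theorem three_rpow_le_sub_one_rpow {q : ℝ} (hq : 2 ≤ q) (hq4 : q ≤ 4) :
    (3 : ℝ) ^ ((q - 2) / 2) ≤ (q - 1) ^ (q / 2) :=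
  calc (3 : ℝ) ^ ((q - 2) / 2) = (1 + 2) ^ ((q - 2) / 2) := by norm_num
    _ ≤ 1 + (q - 2) / 2 * 2 :=
        rpow_one_add_le_one_add_mul_self (by norm_num) (by linarith) (by linarith)
    _ = (q - 1) ^ (1 : ℝ) := by rw [rpow_one]; ring
    _ ≤ (q - 1) ^ (q / 2) := rpow_le_rpow_of_exponent_le (by linarith) (by linarith)

theorem add_one_rpow_le_sub_one_rpow {q : ℝ} (hq : 4 ≤ q) :
    (q + 1) ^ ((q - 2) / 2) ≤ (q - 1) ^ (q / 2) := by
  rw [← log_le_log_iff (by positivity) (by apply rpow_pos_of_pos; linarith),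
    log_rpow (by linarith), log_rpow (by linarith)]
  set D := log (q + 1) - log (q - 1)
  have hD : D * (q - 1) ≤ 2 := by
    have h := log_le_sub_one_of_pos (show 0 < (q + 1) / (q - 1) by apply div_pos <;> linarith)
    rw [log_div (by linarith) (by linarith), div_sub_one (by linarith)] at h
    rw [← le_div_iff₀ (by linarith)]
    exact h.trans_eq (by ring)
  have hD0 : 0 ≤ D := sub_nonneg.2 (log_le_log (by linarith) (by linarith))
  have hlog : 2 * log 2 ≤ log (q + 1) := by
    rw [← log_rpow two_pos]
    exact log_le_log (by positivity) (by norm_num; linarith)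
  nlinarith [log_two_gt_d9]

theorem doubleFactorial_rpow_le {k : ℕ} (hk : 2 ≤ k) {q : ℝ} (hq : 4 ≤ q)
    (hkq : 2 * k ≤ q + 2) :
    ((2 * k - 1)‼ : ℝ) ^ ((q - 2) / (2 * k - 2)) ≤ (q - 1) ^ (q / 2) := by
  have hk' : (2 : ℝ) ≤ k := by exact_mod_cast hk
  have hcast : ((2 * k - 1 : ℕ) : ℝ) = 2 * k - 1 := by
    rw [Nat.cast_sub (by omega)]; push_cast; ring
  calc ((2 * k - 1)‼ : ℝ) ^ ((q - 2) / (2 * k - 2))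
      ≤ (((2 * k - 1) ^ (k - 1) : ℕ) : ℝ) ^ ((q - 2) / (2 * k - 2)) := by
        gcongr
        · exact div_nonneg (by linarith) (by linarith)
        · exact_mod_cast doubleFactorial_two_mul_sub_one_le k
    _ = (2 * k - 1 : ℝ) ^ ((q - 2) / 2) := by
        rw [Nat.cast_pow, hcast, ← rpow_natCast, ← rpow_mul (by linarith),
          Nat.cast_sub (by omega)]
        congr 1
        have : (k : ℝ) - 1 ≠ 0 := by linarith
        rw [Nat.cast_one, show (2 : ℝ) * k - 2 = 2 * (k - 1) by ring]
        field_simp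
    _ ≤ (q + 1) ^ ((q - 2) / 2) := by gcongr <;> linarith
    _ ≤ (q - 1) ^ (q / 2) := add_one_rpow_le_sub_one_rpow hq

theorem abs_le_log_sum_two_mul_cosh {m : ℕ} (v : Fin m → ℝ) (j : Fin m) :
    |v j| ≤ log (∑ j, 2 * cosh (v j)) := by
  have hpos : 0 < ∑ j, 2 * cosh (v j) := sum_pos (fun j _ => by positivity) ⟨j, mem_univ j⟩
  rw [le_log_iff_exp_le hpos]
  calc exp |v j| ≤ 2 * cosh (v j) := by
        rw [← cosh_abs, cosh_eq]; linarith [exp_pos (-|v j|)]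
    _ ≤ ∑ j, 2 * cosh (v j) :=
        single_le_sum (f := fun j => 2 * cosh (v j)) (fun j _ => by positivity) (mem_univ j)

theorem rpow_sum_abs_rpow_le {m : ℕ} {q M : ℝ} (hq : 0 < q) {v : Fin m → ℝ} (hM0 : 0 ≤ M)
    (hM : ∀ j, |v j| ≤ M) : (∑ j, |v j| ^ q) ^ q⁻¹ ≤ m ^ q⁻¹ * M := by
  calc (∑ j, |v j| ^ q) ^ q⁻¹ ≤ (∑ _j : Fin m, M ^ q) ^ q⁻¹ := by
        gcongr with j
        exact hM j
    _ = m ^ q⁻¹ * M := by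
        rw [sum_const, card_univ, Fintype.card_fin, nsmul_eq_mul,
          mul_rpow (by positivity) (by positivity), ← rpow_mul hM0, mul_inv_cancel₀ hq.ne',
          rpow_one]

def rademacherSum {n : ℕ} (ε : Fin n → Bool) (a : Fin n → ℝ) : ℝ :=
  ∑ i, (if ε i then 1 else -1) * a i

theorem sum_fun_fin_succ_bool {M : Type*} [AddCommMonoid M] {n : ℕ}
    (F : (Fin (n + 1) → Bool) → M) :
    ∑ ε, F ε = ∑ ε : Fin n → Bool, (F (Fin.cons true ε) + F (Fin.cons false ε)) := by
  rw [← (Fin.consEquiv fun _ => Bool).sum_comp, Fintype.sum_prod_type, Fintype.sum_bool,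
    ← sum_add_distrib]
  rfl

theorem sum_inv_two_pow_eq_one (n : ℕ) : ∑ _ε : Fin n → Bool, ((2 : ℝ) ^ n)⁻¹ = 1 := by
  simp

theorem rademacherSum_cons {n : ℕ} (s : Bool) (ε : Fin n → Bool) (a : Fin (n + 1) → ℝ) :
    rademacherSum (Fin.cons s ε) a =
      rademacherSum ε (Fin.tail a) + (if s then 1 else -1) * a 0 := by
  simp [rademacherSum, Fin.sum_univ_succ, Fin.tail, add_comm]

theorem rademacherSum_const_mul {n : ℕ} (ε : Fin n → Bool) (c : ℝ) (a : Fin n → ℝ) :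
    rademacherSum ε (fun i => c * a i) = c * rademacherSum ε a := by
  simp only [rademacherSum, mul_sum]
  exact sum_congr rfl fun i _ => by ring

theorem sum_cosh_rademacherSum_le {n : ℕ} (a : Fin n → ℝ) :
    ∑ ε, cosh (rademacherSum ε a) ≤ 2 ^ n * exp ((∑ i, a i ^ 2) / 2) := by
  induction n with
  | zero => simp [rademacherSum]
  | succ n ih =>
    have hsplit : ∀ ε : Fin n → Bool,
        cosh (rademacherSum (Fin.cons true ε) a) + cosh (rademacherSum (Fin.cons false ε) a) =
          2 * cosh (a 0) * cosh (rademacherSum ε (Fin.tail a)) := by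
      intro ε
      simp only [rademacherSum_cons, if_true, Bool.false_eq_true, if_false, cosh_add,
        neg_one_mul, one_mul, cosh_neg, sinh_neg]
      ring
    rw [sum_fun_fin_succ_bool, Fintype.sum_congr _ _ hsplit, ← mul_sum, Fin.sum_univ_succ,
      add_div, exp_add, pow_succ]
    calc 2 * cosh (a 0) * ∑ ε, cosh (rademacherSum ε (Fin.tail a))
        ≤ 2 * exp (a 0 ^ 2 / 2) * (2 ^ n * exp ((∑ i, Fin.tail a i ^ 2) / 2)) := by
          gcongr
          · exact cosh_le_exp_half_sq _
          · exact ih _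
      _ = _ := by simp only [Fin.tail]; ring

-- At `k = 0` the truncated `2 * k - 1` is `0`, and `0‼ = 1` is the right value of `(-1)‼`.
theorem sum_rademacherSum_pow_two_mul_le {n : ℕ} (a : Fin n → ℝ) (k : ℕ) :
    ∑ ε, rademacherSum ε a ^ (2 * k) ≤ 2 ^ n * ((2 * k - 1)‼ * (∑ i, a i ^ 2) ^ k) := by
  induction n generalizing k with
  | zero => cases k <;> simp [rademacherSum]
  | succ n ih =>
    set T := fun ε => rademacherSum ε (Fin.tail a)
    have hsplit : ∀ ε : Fin n → Bool,
        rademacherSum (Fin.cons true ε) a ^ (2 * k) +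
            rademacherSum (Fin.cons false ε) a ^ (2 * k) =
          ∑ i ∈ range (k + 1),
              2 * T ε ^ (2 * i) * a 0 ^ (2 * (k - i)) * (2 * k).choose (2 * i) := by
      intro ε
      simp only [rademacherSum_cons, if_true, Bool.false_eq_true, if_false, one_mul,
        neg_one_mul, ← sub_eq_add_neg]
      exact add_pow_add_sub_pow_two_mul _ _ k
    rw [sum_fun_fin_succ_bool, Fintype.sum_congr _ _ hsplit, sum_comm, Fin.sum_univ_succ,
      add_comm (a 0 ^ 2), add_pow, mul_sum, mul_sum]
    refine sum_le_sum fun i hi => ?_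
    have hcoeff :
        ((2 * k).choose (2 * i) * (2 * i - 1)‼ : ℝ) ≤ (2 * k - 1)‼ * k.choose i := by
      obtain ⟨j, rfl⟩ : ∃ j, k = i + j := ⟨k - i, by have := mem_range.mp hi; omega⟩
      rw [mul_add]
      exact_mod_cast choose_mul_doubleFactorial_le i j
    calc ∑ ε, 2 * T ε ^ (2 * i) * a 0 ^ (2 * (k - i)) * ((2 * k).choose (2 * i) : ℝ)
        = 2 * (a 0 ^ 2) ^ (k - i) * (2 * k).choose (2 * i) * ∑ ε, T ε ^ (2 * i) := by
          rw [mul_sum]; exact sum_congr rfl fun ε _ => by ring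
      _ ≤ 2 * (a 0 ^ 2) ^ (k - i) * (2 * k).choose (2 * i) *
            (2 ^ n * ((2 * i - 1)‼ * (∑ j : Fin n, a j.succ ^ 2) ^ i)) := by
          gcongr; exact ih _ i
      _ = 2 ^ (n + 1) * ((∑ j : Fin n, a j.succ ^ 2) ^ i * (a 0 ^ 2) ^ (k - i)) *
            ((2 * k).choose (2 * i) * (2 * i - 1)‼) := by ring
      _ ≤ 2 ^ (n + 1) * ((∑ j : Fin n, a j.succ ^ 2) ^ i * (a 0 ^ 2) ^ (k - i)) *
            ((2 * k - 1)‼ * k.choose i) := by gcongr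
      _ = _ := by ring

theorem avg_abs_rademacherSum_rpow_le_of_le_two_mul {n k : ℕ} (hk : 2 ≤ k) {q : ℝ}
    (hq : 2 ≤ q) (hqk : q ≤ 2 * k) (a : Fin n → ℝ) :
    ((2 : ℝ) ^ n)⁻¹ * ∑ ε, |rademacherSum ε a| ^ q ≤
      ((2 * k - 1)‼ : ℝ) ^ ((q - 2) / (2 * k - 2)) * (∑ i, a i ^ 2) ^ (q / 2) := by
  set σ := ∑ i, a i ^ 2
  have hσ0 : 0 ≤ σ := sum_nonneg fun i _ => sq_nonneg (a i)
  rcases hσ0.eq_or_lt with hσ | hσ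
  · have ha : ∀ i, a i = 0 := fun i => pow_eq_zero_iff two_ne_zero |>.1 <|
      (sum_eq_zero_iff_of_nonneg fun i _ => sq_nonneg (a i)).1 hσ.symm i (mem_univ i)
    simp only [rademacherSum, ha, mul_zero, sum_const_zero, abs_zero,
      zero_rpow (by linarith : q ≠ 0), mul_zero]
    exact mul_nonneg (rpow_nonneg (Nat.cast_nonneg _) _) (rpow_nonneg hσ0 _)
  have hk' : (0 : ℝ) < 2 * k - 2 := by
    have : (2 : ℝ) ≤ k := by exact_mod_cast hk
    linarith
  set β := (q - 2) / (2 * k - 2)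
  have hβ0 : 0 ≤ β := div_nonneg (by linarith) hk'.le
  have hβ1 : β ≤ 1 := (div_le_one hk').2 (by linarith)
  have hexp : 2 * (1 - β) + 2 * k * β = q := by
    have : β * (2 * k - 2) = q - 2 := div_mul_cancel₀ _ hk'.ne'
    linear_combination this
  have hpt : ∀ ε, |rademacherSum ε a| ^ q =
      (rademacherSum ε a ^ 2) ^ (1 - β) * (rademacherSum ε a ^ (2 * k)) ^ β := fun ε => by
    rw [← hexp]; exact abs_rpow_eq_sq_rpow_mul_pow_rpow _ k hβ0 hβ1
  have hmoment : ∀ j, ∑ ε, ((2 : ℝ) ^ n)⁻¹ * rademacherSum ε a ^ (2 * j) ≤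
      (2 * j - 1)‼ * σ ^ j := fun j => by
    rw [← mul_sum, inv_mul_le_iff₀ (by positivity)]
    exact sum_rademacherSum_pow_two_mul_le a j
  calc ((2 : ℝ) ^ n)⁻¹ * ∑ ε, |rademacherSum ε a| ^ q
      = ∑ ε, ((2 : ℝ) ^ n)⁻¹ *
          ((rademacherSum ε a ^ 2) ^ (1 - β) * (rademacherSum ε a ^ (2 * k)) ^ β) := by
        simp only [mul_sum, hpt]
    _ ≤ σ ^ (1 - β) * ((2 * k - 1)‼ * σ ^ k) ^ β :=
        sum_mul_rpow_mul_rpow_le _ (fun _ _ => by positivity) (fun _ _ => sq_nonneg _)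
          (fun _ _ => (even_two_mul k).pow_nonneg _) (by linarith) hβ0 (by ring) hσ
          (by positivity) (by simpa using hmoment 1) (hmoment k)
    _ = ((2 * k - 1)‼ : ℝ) ^ β * σ ^ (q / 2) := by
        rw [mul_rpow (by positivity) (by positivity), ← rpow_natCast σ k, ← rpow_mul hσ.le,
          mul_left_comm, ← rpow_add hσ, ← hexp]
        congr 2
        ring

theorem avg_abs_rademacherSum_rpow_le {n : ℕ} {q : ℝ} (hq : 2 ≤ q) (a : Fin n → ℝ) :
    ((2 : ℝ) ^ n)⁻¹ * ∑ ε, |rademacherSum ε a| ^ q ≤ ((q - 1) * ∑ i, a i ^ 2) ^ (q / 2) := by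
  -- The interpolation constant grows with `k`, so the even moment `2k` must stay close to `q`.
  obtain ⟨k, hk, hqk, hconst⟩ : ∃ k : ℕ, 2 ≤ k ∧ q ≤ 2 * k ∧
      ((2 * k - 1)‼ : ℝ) ^ ((q - 2) / (2 * k - 2)) ≤ (q - 1) ^ (q / 2) := by
    rcases le_or_gt q 4 with hq4 | hq4
    · refine ⟨2, le_rfl, by norm_num; linarith, ?_⟩
      norm_num
      exact three_rpow_le_sub_one_rpow hq hq4
    · have hceil : q / 2 ≤ ⌈q / 2⌉₊ := Nat.le_ceil _
      have hceil' : (⌈q / 2⌉₊ : ℝ) < q / 2 + 1 := Nat.ceil_lt_add_one (by linarith)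
      have hk : 2 ≤ ⌈q / 2⌉₊ := by exact_mod_cast (by linarith : (2 : ℝ) ≤ ⌈q / 2⌉₊)
      exact ⟨⌈q / 2⌉₊, hk, by linarith, doubleFactorial_rpow_le hk hq4.le (by linarith)⟩
  rw [mul_rpow (by linarith) (sum_nonneg fun i _ => sq_nonneg (a i))]
  calc ((2 : ℝ) ^ n)⁻¹ * ∑ ε, |rademacherSum ε a| ^ q
      ≤ ((2 * k - 1)‼ : ℝ) ^ ((q - 2) / (2 * k - 2)) * (∑ i, a i ^ 2) ^ (q / 2) :=
        avg_abs_rademacherSum_rpow_le_of_le_two_mul hk hq hqk a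
    _ ≤ (q - 1) ^ (q / 2) * (∑ i, a i ^ 2) ^ (q / 2) := by gcongr

theorem avg_rpow_sum_abs_rademacherSum_le_sqrt {n m : ℕ} {q : ℝ} (hq : 2 ≤ q)
    (z : Fin n → Fin m → ℝ) {s : ℝ} (hs : 0 ≤ s) (hz : ∀ j, ∑ i, z i j ^ 2 ≤ s) :
    ((2 : ℝ) ^ n)⁻¹ * ∑ ε, (∑ j, |rademacherSum ε (fun i => z i j)| ^ q) ^ q⁻¹ ≤
      m ^ q⁻¹ * √((q - 1) * s) := by
  have hqs : 0 ≤ (q - 1) * s := mul_nonneg (by linarith) hs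
  set X := fun ε => ∑ j, |rademacherSum ε (fun i => z i j)| ^ q
  have hX : ∀ ε, 0 ≤ X ε := fun ε => sum_nonneg fun j _ => by positivity
  have hjensen : ((2 : ℝ) ^ n)⁻¹ * ∑ ε, X ε ^ q⁻¹ ≤ (((2 : ℝ) ^ n)⁻¹ * ∑ ε, X ε) ^ q⁻¹ := by
    have h := arith_mean_le_rpow_mean univ (fun _ => ((2 : ℝ) ^ n)⁻¹) (fun ε => X ε ^ q⁻¹)
      (fun _ _ => by positivity) (sum_inv_two_pow_eq_one n) (fun ε _ => rpow_nonneg (hX ε) _)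
      (by linarith : (1 : ℝ) ≤ q)
    simp only [← rpow_mul (hX _), inv_mul_cancel₀ (by linarith : q ≠ 0), rpow_one,
      one_div] at h
    rwa [mul_sum, mul_sum]
  have hsum : ((2 : ℝ) ^ n)⁻¹ * ∑ ε, X ε ≤ m * ((q - 1) * s) ^ (q / 2) := by
    calc ((2 : ℝ) ^ n)⁻¹ * ∑ ε, X ε
        = ∑ j, ((2 : ℝ) ^ n)⁻¹ * ∑ ε, |rademacherSum ε (fun i => z i j)| ^ q := by
          rw [sum_comm, mul_sum]
      _ ≤ ∑ _j : Fin m, ((q - 1) * s) ^ (q / 2) := sum_le_sum fun j _ =>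
          (avg_abs_rademacherSum_rpow_le hq _).trans <|
            rpow_le_rpow (mul_nonneg (by linarith) (sum_nonneg fun i _ => sq_nonneg _))
              (mul_le_mul_of_nonneg_left (hz j) (by linarith)) (by linarith)
      _ = m * ((q - 1) * s) ^ (q / 2) := by simp
  calc ((2 : ℝ) ^ n)⁻¹ * ∑ ε, X ε ^ q⁻¹ ≤ (((2 : ℝ) ^ n)⁻¹ * ∑ ε, X ε) ^ q⁻¹ := hjensen
    _ ≤ (m * ((q - 1) * s) ^ (q / 2)) ^ q⁻¹ := by gcongr
    _ = m ^ q⁻¹ * √((q - 1) * s) := by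
        rw [mul_rpow (by positivity) (rpow_nonneg hqs _), ← rpow_mul hqs, sqrt_eq_rpow]
        congr 2
        field_simp

theorem avg_sum_two_mul_cosh_rademacherSum_le {n m : ℕ} (z : Fin n → Fin m → ℝ) {s : ℝ}
    (hz : ∀ j, ∑ i, z i j ^ 2 ≤ s) (t : ℝ) :
    ((2 : ℝ) ^ n)⁻¹ * ∑ ε, ∑ j, 2 * cosh (t * rademacherSum ε (fun i => z i j)) ≤
      2 * m * exp (t ^ 2 * s / 2) := by
  rw [inv_mul_le_iff₀ (by positivity), sum_comm]
  calc ∑ j, ∑ ε, 2 * cosh (t * rademacherSum ε (fun i => z i j))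
      ≤ ∑ _j : Fin m, 2 * (2 ^ n * exp (t ^ 2 * s / 2)) := by
        refine sum_le_sum fun j _ => ?_
        rw [← mul_sum]
        gcongr
        have h := sum_cosh_rademacherSum_le (fun i => t * z i j)
        simp only [rademacherSum_const_mul, mul_pow, ← mul_sum] at h
        exact h.trans (by gcongr; exact hz j)
    _ = 2 ^ n * (2 * m * exp (t ^ 2 * s / 2)) := by simp; ring

theorem avg_rpow_sum_abs_rademacherSum_le_log {n m : ℕ} (hm : 0 < m) {q : ℝ} (hq : 0 < q)
    (z : Fin n → Fin m → ℝ) {s : ℝ} (hz : ∀ j, ∑ i, z i j ^ 2 ≤ s) {t : ℝ} (ht : 0 < t) :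
    ((2 : ℝ) ^ n)⁻¹ * ∑ ε, (∑ j, |rademacherSum ε (fun i => z i j)| ^ q) ^ q⁻¹ ≤
      m ^ q⁻¹ * ((log (2 * m) + t ^ 2 * s / 2) / t) := by
  set Z := fun ε => ∑ j, 2 * cosh (t * rademacherSum ε (fun i => z i j))
  have hZ : ∀ ε, 0 < Z ε := fun ε => sum_pos (fun j _ => by positivity) ⟨⟨0, hm⟩, mem_univ _⟩
  have hpt : ∀ ε, (∑ j, |rademacherSum ε (fun i => z i j)| ^ q) ^ q⁻¹ ≤
      m ^ q⁻¹ * (log (Z ε) / t) := by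
    intro ε
    have hj : ∀ j, |rademacherSum ε (fun i => z i j)| ≤ log (Z ε) / t := fun j => by
      have h := abs_le_log_sum_two_mul_cosh (fun j => t * rademacherSum ε (fun i => z i j)) j
      rw [abs_mul, abs_of_pos ht] at h
      rwa [le_div_iff₀ ht, mul_comm]
    exact rpow_sum_abs_rpow_le hq ((abs_nonneg _).trans (hj ⟨0, hm⟩)) hj
  have hjensen : ((2 : ℝ) ^ n)⁻¹ * ∑ ε, log (Z ε) ≤ log (((2 : ℝ) ^ n)⁻¹ * ∑ ε, Z ε) := by
    have h := strictConcaveOn_log_Ioi.concaveOn.le_map_sum (t := univ)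
      (w := fun _ => ((2 : ℝ) ^ n)⁻¹) (p := Z) (fun _ _ => by positivity)
      (sum_inv_two_pow_eq_one n) (fun ε _ => hZ ε)
    simpa only [smul_eq_mul, mul_sum] using h
  calc ((2 : ℝ) ^ n)⁻¹ * ∑ ε, (∑ j, |rademacherSum ε (fun i => z i j)| ^ q) ^ q⁻¹
      ≤ ((2 : ℝ) ^ n)⁻¹ * ∑ ε, m ^ q⁻¹ * (log (Z ε) / t) := by
        gcongr with ε; exact hpt ε
    _ = m ^ q⁻¹ * ((((2 : ℝ) ^ n)⁻¹ * ∑ ε, log (Z ε)) / t) := by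
        rw [← mul_sum, ← sum_div]; ring
    _ ≤ m ^ q⁻¹ * (log (2 * m * exp (t ^ 2 * s / 2)) / t) := by
        gcongr
        exact hjensen.trans <|
          log_le_log (mul_pos (by positivity) (sum_pos (fun ε _ => hZ ε) univ_nonempty))
            (avg_sum_two_mul_cosh_rademacherSum_le z hz t)
    _ = m ^ q⁻¹ * ((log (2 * m) + t ^ 2 * s / 2) / t) := by
        rw [log_mul (by positivity) (exp_pos _).ne', log_exp]

theorem avg_rpow_sum_abs_rademacherSum_le_sqrt_log {n m : ℕ} (hm : 0 < m) {q : ℝ} (hq : 0 < q)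
    (z : Fin n → Fin m → ℝ) {s : ℝ} (hs : 0 < s) (hz : ∀ j, ∑ i, z i j ^ 2 ≤ s) :
    ((2 : ℝ) ^ n)⁻¹ * ∑ ε, (∑ j, |rademacherSum ε (fun i => z i j)| ^ q) ^ q⁻¹ ≤
      m ^ q⁻¹ * √(2 * log (2 * m) * s) := by
  have hm' : (1 : ℝ) ≤ m := by exact_mod_cast hm
  have hL : 0 < log (2 * m) := log_pos (by linarith)
  set t := √(2 * log (2 * m) / s)
  have ht : 0 < t := sqrt_pos.2 (by positivity)
  have ht2 : t ^ 2 * s = 2 * log (2 * m) := by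
    rw [sq_sqrt (by positivity)]; field_simp
  refine (avg_rpow_sum_abs_rademacherSum_le_log hm hq z hz ht).trans_eq ?_
  rw [← ht2, show t ^ 2 * s * s = (t * s) ^ 2 by ring, sqrt_sq (by positivity)]
  congr 1
  rw [div_eq_iff ht.ne']
  linear_combination (-1 / 2 : ℝ) * ht2

/-- Lemma 4, case `p ∈ (1,2]`: expected `ℓ_{p*}` norm of a Rademacher average of
vectors bounded in `ℓ_∞`. -/
theorem rademacher_vector_bound_p_in_1_2
    (p : ℝ) (hp1 : 1 < p) (hp2 : p ≤ 2) (m1 n : ℕ) (hm : 0 < m1) (hn : 1 ≤ n)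
    (z : Fin n → Fin m1 → ℝ) (hz : ∀ i j, |z i j| ≤ 1) :
    (n : ℝ)⁻¹ * (((2 : ℝ) ^ n)⁻¹ * ∑ ε : Fin n → Bool,
        (∑ j, |∑ i, (if ε i then (1 : ℝ) else -1) * z i j| ^ (p / (p - 1)))
          ^ ((p - 1) / p)) ≤
      (m1 : ℝ) ^ (1 - 1 / p) / Real.sqrt n *
        min (Real.sqrt (p / (p - 1) - 1)) (Real.sqrt (2 * Real.log (2 * m1))) := by
  set q := p / (p - 1)
  have hq : 2 ≤ q := by rw [le_div_iff₀ (by linarith)]; linarith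
  have hn₀ : (0 : ℝ) < n := by exact_mod_cast hn
  have hcol : ∀ j, ∑ i, z i j ^ 2 ≤ n := fun j =>
    (sum_le_card_nsmul _ _ 1 fun i _ => (sq_le_one_iff_abs_le_one _).2 (hz i j)).trans_eq
      (by simp)
  have hA := avg_rpow_sum_abs_rademacherSum_le_sqrt hq z hn₀.le hcol
  have hB := avg_rpow_sum_abs_rademacherSum_le_sqrt_log hm (by linarith : 0 < q) z hn₀ hcol
  rw [show (p - 1) / p = q⁻¹ by rw [inv_div],
    show 1 - 1 / p = q⁻¹ by rw [inv_div]; field_simp]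
  calc (n : ℝ)⁻¹ * (((2 : ℝ) ^ n)⁻¹ * ∑ ε : Fin n → Bool,
        (∑ j, |rademacherSum ε (fun i => z i j)| ^ q) ^ q⁻¹)
      ≤ (n : ℝ)⁻¹ * (m1 ^ q⁻¹ * min √((q - 1) * n) √(2 * log (2 * m1) * n)) := by
        rw [mul_min_of_nonneg _ _ (by positivity)]
        gcongr
        exact le_min hA hB
    _ = m1 ^ q⁻¹ / √n * min √(q - 1) √(2 * log (2 * m1)) := by
        rw [sqrt_mul' _ hn₀.le, sqrt_mul' _ hn₀.le, ← min_mul_of_nonneg _ _ (sqrt_nonneg _)]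
        field_simp
        rw [sq_sqrt hn₀.le, mul_comm]
end

section
/- Let p, q ≥ 1 with p < ∞, let p* satisfy 1/p + 1/p* = 1, and let s_1, s_2 ≥ 1 be integers. Let ε ∈ {-1,+1}^n, let g : ℝ^{m_1} → ℝ^{s_1} be any function, let x_1, …, x_n ∈ ℝ^{m_1}, and suppose B ≥ 0 satisfies |Σ_{i=1}^n ε_i σ(⟨v, g(x_i)⟩)| ≤ B·‖v‖_p for every vector v ∈ ℝ^{s_1}. Then for every matrix V ∈ ℝ^{s_1×s_2}, ‖Σ_{i=1}^n ε_i σ∘(V^T g(x_i))‖_{p*} ≤ s_2^{[1/p* − 1/q]_+} · B · ‖V‖_{p,q}, where [x]_+ = max(x,0) and 1/q = 0 when q = ∞. -/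
/-!
Applying the hypothesis to the `j`-th column of `V` bounds the `j`-th entry of the vector by
`B` times the `p`-norm of that column. Hence its `ℓ^{p*}` norm is at most `B` times the `ℓ^{p*}`
norm of the vector of column norms, and the factor `s₂^{[1/p* - 1/q]_+}` is the comparison of
`ℓ^{p*}` and `ℓ^q` norms on `ℝ^{s₂}`: Hölder's inequality against the constant vector when
`p* ≤ q`, monotonicity of `ℓʳ` norms in `r` when `q < p*`.
-/

open scoped BigOperators Classical ENNReal NNReal
open MeasureTheory

section EllNorm

variable {ι : Type*} [Fintype ι]

/-- The `ℓʳ` norm of a vector with nonnegative entries (`r = ⊤` gives the largest entry). -/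
noncomputable def ellNorm (r : ℝ≥0∞) (c : ι → ℝ) : ℝ :=
  if r = ⊤ then ⨆ j, c j else (∑ j, c j ^ r.toReal) ^ (1 / r.toReal)

lemma qInv_eq_one_div_toReal (r : ℝ≥0∞) : qInv r = 1 / r.toReal := by
  unfold qInv
  split_ifs with hr <;> simp [hr]

lemma sum_rpow_nonneg {c : ι → ℝ} (hc : ∀ j, 0 ≤ c j) (r : ℝ) : 0 ≤ ∑ j, c j ^ r :=
  Finset.sum_nonneg fun j _ => Real.rpow_nonneg (hc j) r

lemma le_sum_rpow_rpow_one_div {c : ι → ℝ} (hc : ∀ j, 0 ≤ c j) {r : ℝ} (hr : 0 < r) (j : ι) :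
    c j ≤ (∑ i, c i ^ r) ^ (1 / r) := by
  rw [one_div, Real.le_rpow_inv_iff_of_pos (hc j) (sum_rpow_nonneg hc r) hr]
  exact Finset.single_le_sum (fun i _ => Real.rpow_nonneg (hc i) r) (Finset.mem_univ j)

lemma sum_rpow_rpow_one_div_le_const_mul {a c : ι → ℝ} (ha : ∀ j, 0 ≤ a j)
    (hc : ∀ j, 0 ≤ c j) {B : ℝ} (hB : 0 ≤ B) (hac : ∀ j, a j ≤ B * c j) {r : ℝ} (hr : 0 < r) :
    (∑ j, a j ^ r) ^ (1 / r) ≤ B * (∑ j, c j ^ r) ^ (1 / r) := by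
  calc (∑ j, a j ^ r) ^ (1 / r) ≤ (∑ j, (B * c j) ^ r) ^ (1 / r) := by
        gcongr with j
        · exact sum_rpow_nonneg ha r
        · exact ha j
        · exact hac j
    _ = B * (∑ j, c j ^ r) ^ (1 / r) := by
        simp_rw [Real.mul_rpow hB (hc _), ← Finset.mul_sum]
        rw [Real.mul_rpow (Real.rpow_nonneg hB r) (sum_rpow_nonneg hc r), ← Real.rpow_mul hB,
          mul_one_div_cancel hr.ne', Real.rpow_one]

lemma sum_rpow_rpow_one_div_antitone {c : ι → ℝ} (hc : ∀ j, 0 ≤ c j) {r s : ℝ} (hr : 0 < r)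
    (hrs : r ≤ s) : (∑ j, c j ^ s) ^ (1 / s) ≤ (∑ j, c j ^ r) ^ (1 / r) := by
  have hs : 0 < s := hr.trans_le hrs
  set N := (∑ j, c j ^ r) ^ (1 / r)
  have hN : 0 ≤ N := Real.rpow_nonneg (sum_rpow_nonneg hc r) _
  have hNr : ∑ j, c j ^ r = N ^ r := by
    rw [← Real.rpow_mul (sum_rpow_nonneg hc r), one_div_mul_cancel hr.ne', Real.rpow_one]
  have hsplit : ∀ x : ℝ, 0 ≤ x → x ^ s = x ^ r * x ^ (s - r) := fun x hx => by
    rw [← Real.rpow_add' hx (by linarith), add_sub_cancel]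
  -- each `c j ≤ N`, so `c j ^ s ≤ c j ^ r * N ^ (s - r)`
  have hsum : ∑ j, c j ^ s ≤ N ^ s :=
    calc ∑ j, c j ^ s ≤ ∑ j, c j ^ r * N ^ (s - r) := by
          gcongr with j
          rw [hsplit _ (hc j)]
          exact mul_le_mul_of_nonneg_left
            (Real.rpow_le_rpow (hc j) (le_sum_rpow_rpow_one_div hc hr j) (sub_nonneg.2 hrs))
            (Real.rpow_nonneg (hc j) r)
      _ = N ^ s := by rw [← Finset.sum_mul, hNr, ← hsplit N hN]
  rw [one_div, Real.rpow_inv_le_iff_of_pos (sum_rpow_nonneg hc s) hN hs]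
  exact hsum

lemma sum_rpow_rpow_one_div_le_card_rpow_mul {c : ι → ℝ} (hc : ∀ j, 0 ≤ c j) {r s : ℝ}
    (hr : 0 < r) (hrs : r ≤ s) :
    (∑ j, c j ^ r) ^ (1 / r) ≤
      (Fintype.card ι : ℝ) ^ (1 / r - 1 / s) * (∑ j, c j ^ s) ^ (1 / s) := by
  have hs : 0 < s := hr.trans_le hrs
  have hpow := Real.rpow_sum_le_const_mul_sum_rpow_of_nonneg Finset.univ
    ((one_le_div hr).2 hrs) (f := fun j => c j ^ r) (fun j _ => Real.rpow_nonneg (hc j) r)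
  simp only [← Real.rpow_mul (hc _), mul_div_cancel₀ s hr.ne', Finset.card_univ] at hpow
  have hcard : (0 : ℝ) ≤ Fintype.card ι := Nat.cast_nonneg _
  calc (∑ j, c j ^ r) ^ (1 / r) = ((∑ j, c j ^ r) ^ (s / r)) ^ (1 / s) := by
        rw [← Real.rpow_mul (sum_rpow_nonneg hc r)]
        field_simp
    _ ≤ ((Fintype.card ι : ℝ) ^ (s / r - 1) * ∑ j, c j ^ s) ^ (1 / s) := by
        gcongr
        exact Real.rpow_nonneg (sum_rpow_nonneg hc r) _
    _ = (Fintype.card ι : ℝ) ^ (1 / r - 1 / s) * (∑ j, c j ^ s) ^ (1 / s) := by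
        rw [Real.mul_rpow (Real.rpow_nonneg hcard _) (sum_rpow_nonneg hc s),
          ← Real.rpow_mul hcard]
        congr 2
        field_simp

lemma sum_rpow_rpow_one_div_le_card_rpow_mul_iSup {c : ι → ℝ} (hc : ∀ j, 0 ≤ c j) {r : ℝ}
    (hr : 0 < r) :
    (∑ j, c j ^ r) ^ (1 / r) ≤ (Fintype.card ι : ℝ) ^ (1 / r) * ⨆ j, c j := by
  have hsup : 0 ≤ ⨆ j, c j := Real.iSup_nonneg hc
  have hsum : ∑ j, c j ^ r ≤ Fintype.card ι * (⨆ j, c j) ^ r := by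
    rw [← nsmul_eq_mul, ← Finset.card_univ, ← Finset.sum_const]
    gcongr with j
    exacts [hc j, le_ciSup (Set.finite_range c).bddAbove j]
  rw [one_div, Real.rpow_inv_le_iff_of_pos (sum_rpow_nonneg hc r) (by positivity) hr,
    Real.mul_rpow (by positivity) hsup, ← Real.rpow_mul (by positivity),
    inv_mul_cancel₀ hr.ne', Real.rpow_one]
  exact hsum

lemma ellNorm_le_const_mul {a c : ι → ℝ} (ha : ∀ j, 0 ≤ a j) (hc : ∀ j, 0 ≤ c j) {B : ℝ}
    (hB : 0 ≤ B) (hac : ∀ j, a j ≤ B * c j) {r : ℝ≥0∞} (hr : 0 < r) :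
    ellNorm r a ≤ B * ellNorm r c := by
  unfold ellNorm
  split_ifs with hr_top
  · exact Real.iSup_le
      (fun j => (hac j).trans (mul_le_mul_of_nonneg_left
        (le_ciSup (Set.finite_range c).bddAbove j) hB))
      (mul_nonneg hB (Real.iSup_nonneg hc))
  · exact sum_rpow_rpow_one_div_le_const_mul ha hc hB hac (ENNReal.toReal_pos hr.ne' hr_top)

lemma iSup_le_ellNorm {c : ι → ℝ} (hc : ∀ j, 0 ≤ c j) {q : ℝ≥0∞} (hq : 0 < q) :
    ⨆ j, c j ≤ ellNorm q c := by
  unfold ellNorm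
  split_ifs with hq_top
  · exact le_rfl
  · exact Real.iSup_le (le_sum_rpow_rpow_one_div hc (ENNReal.toReal_pos hq.ne' hq_top))
      (Real.rpow_nonneg (sum_rpow_nonneg hc _) _)

lemma ellNorm_le_card_rpow_mul_ellNorm {c : ι → ℝ} (hc : ∀ j, 0 ≤ c j) {t q : ℝ≥0∞}
    (ht : 0 < t) (hq : 0 < q) :
    ellNorm t c ≤ (Fintype.card ι : ℝ) ^ max (qInv t - qInv q) 0 * ellNorm q c := by
  simp only [qInv_eq_one_div_toReal]
  by_cases ht_top : t = ⊤
  · subst ht_top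
    rw [ENNReal.toReal_top, div_zero, zero_sub,
      max_eq_right (neg_nonpos.2 (one_div_nonneg.2 ENNReal.toReal_nonneg)), Real.rpow_zero,
      one_mul, ellNorm, if_pos rfl]
    exact iSup_le_ellNorm hc hq
  have ht' : 0 < t.toReal := ENNReal.toReal_pos ht.ne' ht_top
  by_cases hq_top : q = ⊤
  · subst hq_top
    rw [ENNReal.toReal_top, div_zero, sub_zero, max_eq_left (one_div_nonneg.2 ht'.le)]
    simp only [ellNorm, if_neg ht_top]
    exact sum_rpow_rpow_one_div_le_card_rpow_mul_iSup hc ht'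
  have hq' : 0 < q.toReal := ENNReal.toReal_pos hq.ne' hq_top
  simp only [ellNorm, if_neg ht_top, if_neg hq_top]
  rcases le_total t.toReal q.toReal with htq | hqt
  · rw [max_eq_left (sub_nonneg.2 (one_div_le_one_div_of_le ht' htq))]
    exact sum_rpow_rpow_one_div_le_card_rpow_mul hc ht' htq
  · rw [max_eq_right (sub_nonpos.2 (one_div_le_one_div_of_le hq' hqt)), Real.rpow_zero, one_mul]
    exact sum_rpow_rpow_one_div_antitone hc hq' hqt

end EllNorm

lemma lpqNorm_eq_ellNorm (p : ℝ) (q : ℝ≥0∞) {s1 s2 : ℕ} (A : Matrix (Fin s1) (Fin s2) ℝ) :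
    lpqNorm p q A = ellNorm q (fun j => (∑ i, |A i j| ^ p) ^ (1 / p)) := by
  unfold lpqNorm ellNorm
  split_ifs
  · rfl
  · congr 1
    refine Finset.sum_congr rfl fun j _ => ?_
    rw [← Real.rpow_mul (Finset.sum_nonneg fun i _ => Real.rpow_nonneg (abs_nonneg _) p),
      one_div_mul_eq_div]

lemma ENNReal.conjExponent_one : ENNReal.conjExponent 1 = ⊤ := by
  simp [ENNReal.conjExponent]

lemma ENNReal.conjExponent_ofReal {p : ℝ} (hp : 1 < p) :
    (ENNReal.ofReal p).conjExponent = ENNReal.ofReal (p / (p - 1)) := by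
  have hp' : 0 < p - 1 := by linarith
  rw [ENNReal.conjExponent, ← ENNReal.ofReal_one, ← ENNReal.ofReal_sub _ zero_le_one,
    ← ENNReal.ofReal_inv_of_pos hp', ← ENNReal.ofReal_add zero_le_one (by positivity)]
  congr 1
  field_simp
  ring

lemma dualNorm_eq_ellNorm {p : ℝ} (hp : 1 ≤ p) {m : ℕ} (v : Fin m → ℝ) :
    dualNorm p v = ellNorm (ENNReal.ofReal p).conjExponent (fun j => |v j|) := by
  unfold dualNorm ellNorm
  rcases hp.eq_or_lt with rfl | hp
  · rw [if_pos rfl, ENNReal.ofReal_one, ENNReal.conjExponent_one, if_pos rfl]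
  · rw [if_neg hp.ne', ENNReal.conjExponent_ofReal hp, if_neg ENNReal.ofReal_ne_top,
      ENNReal.toReal_ofReal (div_nonneg (by linarith) (by linarith)), one_div_div]

lemma qInv_conjExponent_ofReal {p : ℝ} (hp : 1 ≤ p) :
    qInv (ENNReal.ofReal p).conjExponent = 1 - 1 / p := by
  rcases hp.eq_or_lt with rfl | hp
  · rw [ENNReal.ofReal_one, ENNReal.conjExponent_one, qInv, if_pos rfl]
    norm_num
  · rw [qInv_eq_one_div_toReal, ENNReal.conjExponent_ofReal hp,
      ENNReal.toReal_ofReal (div_nonneg (by linarith) (by linarith))]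
    field_simp

theorem relu_matrix_dual_norm_bound_general
    (p : ℝ) (hp : 1 ≤ p) (q : ℝ≥0∞) (hq : 1 ≤ q)
    (s1 s2 m1 n : ℕ)
    (ε : Fin n → ℝ)
    (g : (Fin m1 → ℝ) → Fin s1 → ℝ) (x : Fin n → Fin m1 → ℝ)
    (B : ℝ) (hB : 0 ≤ B)
    (hcol : ∀ v : Fin s1 → ℝ,
      |∑ i, ε i * relu (∑ j, v j * g (x i) j)| ≤ B * (∑ j, |v j| ^ p) ^ (1 / p)) :
    ∀ V : Matrix (Fin s1) (Fin s2) ℝ,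
      dualNorm p (fun j2 : Fin s2 => ∑ i, ε i * relu (∑ j, V j j2 * g (x i) j)) ≤
        (s2 : ℝ) ^ max ((1 - 1 / p) - qInv q) 0 * B * lpqNorm p q V := by
  intro V
  set pStar := (ENNReal.ofReal p).conjExponent
  set colNorm : Fin s2 → ℝ := fun j2 => (∑ j, |V j j2| ^ p) ^ (1 / p)
  have hpStar : 0 < pStar := zero_lt_one.trans_le le_self_add
  have hcolNorm : ∀ j2, 0 ≤ colNorm j2 := fun j2 =>
    Real.rpow_nonneg (Finset.sum_nonneg fun j _ => Real.rpow_nonneg (abs_nonneg _) p) _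
  rw [dualNorm_eq_ellNorm hp, lpqNorm_eq_ellNorm]
  calc ellNorm pStar (fun j2 => |∑ i, ε i * relu (∑ j, V j j2 * g (x i) j)|)
      ≤ B * ellNorm pStar colNorm :=
        ellNorm_le_const_mul (fun _ => abs_nonneg _) hcolNorm hB (fun j2 => hcol (V · j2)) hpStar
    _ ≤ B * ((s2 : ℝ) ^ max (qInv pStar - qInv q) 0 * ellNorm q colNorm) := by
        gcongr
        simpa using ellNorm_le_card_rpow_mul_ellNorm hcolNorm hpStar (zero_lt_one.trans_le hq)
    _ = (s2 : ℝ) ^ max ((1 - 1 / p) - qInv q) 0 * B * ellNorm q colNorm := by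
        rw [qInv_conjExponent_ofReal hp]
        ring

/-- Lemma 5: a column-wise bound for a signed sum of ReLU outputs upgrades to a
bound in `ℓ_{p*}` norm with the `L_{p,q}` matrix norm, at the price of a factor
`s₂^{[1/p* - 1/q]_+}`. -/
theorem relu_matrix_dual_norm_bound
    (p : ℝ) (hp : 1 ≤ p) (q : ℝ≥0∞) (hq : 1 ≤ q)
    (s1 s2 m1 n : ℕ) (hs1 : 1 ≤ s1) (hs2 : 1 ≤ s2)
    (ε : Fin n → ℝ) (hε : ∀ i, ε i = 1 ∨ ε i = -1)
    (g : (Fin m1 → ℝ) → Fin s1 → ℝ) (x : Fin n → Fin m1 → ℝ)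
    (B : ℝ) (hB : 0 ≤ B)
    (hcol : ∀ v : Fin s1 → ℝ,
      |∑ i, ε i * relu (∑ j, v j * g (x i) j)| ≤ B * (∑ j, |v j| ^ p) ^ (1 / p)) :
    ∀ V : Matrix (Fin s1) (Fin s2) ℝ,
      dualNorm p (fun j2 : Fin s2 => ∑ i, ε i * relu (∑ j, V j j2 * g (x i) j)) ≤
        (s2 : ℝ) ^ max ((1 - 1 / p) - qInv q) 0 * B * lpqNorm p q V :=
  relu_matrix_dual_norm_bound_general p hp q hq s1 s2 m1 n ε g x B hB hcol
end
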